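/- arXiv:2308.04676 — 2 statements merged into one kernel-verified Lean document; each statement's English description precedes it below -/
import Mathlib

section
/- Let q ≥ 2, m ≥ 2, d ≥ 2 with d < m, let {I₁,…,I_d} be a partition of {1,…,m} with |I_α| = m_α, and let π_α : {1,…,m_α} → I_α be bijections. Let f(x) = Σ_α Σ_{β=1}^{m_α-1} a_{α,β} x_{π_α(β)} x_{π_α(β+1)} + Σ_{l=1}^{q-1} Σ_{u=1}^{m} h_{u,l} x_u^l + h₀ with each a_{α,β} coprime to q and h_{u,l}, h₀ ∈ ℤ_q, and for 0 ≤ n, p ≤ q^d - 1 with q-ary digits (n₁,…,n_d), (p₁,…,p_d) define f^p_n(x) = f(x) + Σ_α n_α x_{π_α(1)} + Σ_α p_α x_{π_α(m_α)}. Let F^p = {f^p_0,…,f^p_{q^d-1}} denote the corresponding sets of length-q^m sequences over ℤ_q (evaluating at q-ary digit vectors). Then {F^0,…,F^{q^d-1}} is a (q^d, q^d, q^m) complete complementary code: for all 0 ≤ p, p' ≤ q^d - 1 and all shifts τ with (p,τ) ≠ (p',0) and |τ| ≤ q^m - 1, Σ_{n=0}^{q^d-1} R_{f^p_n, f^{p'}_n}(τ)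 = 0. -/
open Finset Complex

/-- The primitive `q`-th root of unity `ξ = e^{2πi/q}`. -/
noncomputable def xiq (q : ℕ) : ℂ := Complex.exp (2 * Real.pi * Complex.I / q)

/-- The complex value `ξ^x` attached to `x ∈ ℤ_q`. -/
noncomputable def ec (q : ℕ) (x : ZMod q) : ℂ := xiq q ^ x.val

/-- The `k`-th `q`-ary digit (1-indexed) of the natural number `i`. -/
def dig (q i k : ℕ) : ℕ := i / q ^ (k - 1) % q

/-- Aperiodic cross-correlation of two length-`len` `ℤ_q`-valued sequences at shift `τ`. -/
noncomputable def Rq (q len : ℕ) (a b : ℕ → ZMod q) (τ : ℤ) : ℂ :=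
  if 0 ≤ τ then ∑ i ∈ Finset.range (len - τ.toNat), ec q (a i - b (i + τ.toNat))
  else ∑ i ∈ Finset.range (len - (-τ).toNat), ec q (a (i + (-τ).toNat) - b i)

/-- The EBF `f^p_n` of Theorem 8, evaluated at the `q`-ary digit vector of `i`. -/
def fpn (q m d : ℕ) (mα : ℕ → ℕ) (π : ℕ → ℕ → ℕ) (a : ℕ → ℕ → ℕ)
    (h : ℕ → ℕ → ZMod q) (h0 : ZMod q) (p n i : ℕ) : ZMod q :=
  (∑ α ∈ Finset.Icc 1 d, ∑ β ∈ Finset.Icc 1 (mα α - 1),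
      (a α β : ZMod q) * (dig q i (π α β) : ZMod q) * (dig q i (π α (β + 1)) : ZMod q))
  + (∑ l ∈ Finset.Icc 1 (q - 1), ∑ u' ∈ Finset.Icc 1 m,
      h u' l * (dig q i u' : ZMod q) ^ l) + h0
  + (∑ α ∈ Finset.Icc 1 d, (dig q n α : ZMod q) * (dig q i (π α 1) : ZMod q))
  + (∑ α ∈ Finset.Icc 1 d, (dig q p α : ZMod q) * (dig q i (π α (mα α)) : ZMod q))

/-!
Summing over `n` first, the terms `n_α x_{π_α(1)}` turn the sum into a product of geometric sums
over `ℤ_q`: it vanishes unless `i` and `i + τ` agree at every position `π_α(1)`, and then it is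
`q^d` times the correlation of `f^p_0` and `f^{p'}_0`. The remaining sum over `i` is killed by a
pairing argument: pick a position `w` at which `i` and `i + τ` agree and let that digit run
through `ℤ_q`; this moves `i` and `i + τ` together, and if the phase changes by a fixed nonzero
multiple of the digit, the orbit contributes a vanishing geometric sum.
* For `τ = 0` and `p ≠ p'`, take `w = π_α(m_α)` with `p_α ≠ p'_α`; the phase changes by
  `p_α - p'_α`.
* For `τ > 0`, take the first block `α` and then the first index `β` at which `i` and `i + τ`
  differ; `β ≥ 2` because the digits at `π_α(1)` agree, and `w = π_α(β - 1)`. Only the term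
  `a_{α,β-1} x_w x_{π_α(β)}` sees the change, so the phase moves by
  `a_{α,β-1} (i_{π_α(β)} - (i + τ)_{π_α(β)})`, a unit times a nonzero element. The choice of `w`
  depends only on where `i` and `i + τ` differ, which the move does not change.
* Negative shifts are complex conjugates of positive ones with `p` and `p'` exchanged.
-/

open Function

section character

variable {q : ℕ} [NeZero q]

lemma ec_eq_stdAddChar (x : ZMod q) : ec q x = ZMod.stdAddChar x := by
  rw [ec, xiq, ZMod.stdAddChar_apply, ZMod.toCircle_apply, ← Complex.exp_nat_mul]
  congr 1
  ring

lemma ec_add (x y : ZMod q) : ec q (x + y) = ec q x * ec q y := by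
  simp only [ec_eq_stdAddChar, AddChar.map_add_eq_mul]

lemma ec_sum {ι : Type*} (s : Finset ι) (f : ι → ZMod q) :
    ec q (∑ i ∈ s, f i) = ∏ i ∈ s, ec q (f i) := by
  classical
  induction s using Finset.induction_on with
  | empty => simp [ec_eq_stdAddChar]
  | insert a s ha ih => rw [sum_insert ha, prod_insert ha, ec_add, ih]

lemma ec_sub_eq_conj (x y : ZMod q) : ec q (x - y) = starRingEnd ℂ (ec q (y - x)) := by
  rw [← neg_sub, ec_eq_stdAddChar, ec_eq_stdAddChar, AddChar.map_neg_eq_conj]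

lemma sum_range_natCast_eq_sum {M : Type*} [AddCommMonoid M] (f : ZMod q → M) :
    ∑ y ∈ range q, f y = ∑ z : ZMod q, f z :=
  sum_nbij' (fun y => (y : ZMod q)) ZMod.val (by simp) (by simp [ZMod.val_lt])
    (fun y hy => ZMod.val_cast_of_lt (mem_range.mp hy)) (fun z _ => ZMod.natCast_zmod_val z)
    (fun _ _ => rfl)

lemma sum_range_ec_natCast_mul (c : ZMod q) :
    ∑ y ∈ range q, ec q (y * c) = if c = 0 then (q : ℂ) else 0 := by
  classical
  rw [sum_range_natCast_eq_sum (fun z => ec q (z * c))]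
  simp only [ec_eq_stdAddChar, AddChar.sum_mulShift c (ZMod.isPrimitive_stdAddChar q),
    ZMod.card, Nat.cast_ite, Nat.cast_zero]

end character

section digits

variable {q : ℕ}

lemma dig_lt (hq : 0 < q) (i k : ℕ) : dig q i k < q := Nat.mod_lt _ hq

lemma dig_zero_left (k : ℕ) : dig q 0 k = 0 := by simp [dig]

lemma natCast_dig_inj (hq : 0 < q) {i j k l : ℕ} :
    (dig q i k : ZMod q) = dig q j l ↔ dig q i k = dig q j l := by
  have : NeZero q := ⟨hq.ne'⟩
  exact ⟨fun h => by simpa [ZMod.val_cast_of_lt (dig_lt hq _ _)] using congrArg ZMod.val h,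
    fun h => by rw [h]⟩

lemma dig_succ_eq_finFunctionFinEquiv_symm {D : ℕ} (n : Fin (q ^ D)) (k : Fin D) :
    dig q n (k + 1) = finFunctionFinEquiv.symm n k := by
  simp [dig, finFunctionFinEquiv_symm_apply_val]

lemma eq_of_dig_eq {m i j : ℕ} (hi : i < q ^ m) (hj : j < q ^ m)
    (h : ∀ k ∈ Icc 1 m, dig q i k = dig q j k) : i = j := by
  have := finFunctionFinEquiv.symm.injective (a₁ := ⟨i, hi⟩) (a₂ := ⟨j, hj⟩) <| funext fun k =>
    Fin.ext <| by
      rw [← dig_succ_eq_finFunctionFinEquiv_symm, ← dig_succ_eq_finFunctionFinEquiv_symm]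
      exact h _ (mem_Icc.mpr ⟨by omega, by omega⟩)
  exact congrArg Fin.val this

lemma prod_Icc_one_eq_prod_fin {M : Type*} [CommMonoid M] (D : ℕ) (f : ℕ → M) :
    ∏ α ∈ Icc 1 D, f α = ∏ k : Fin D, f (k + 1) := by
  rw [Fin.prod_univ_eq_prod_range (fun k => f (k + 1)), range_eq_Ico, prod_Ico_add']
  rfl

lemma sum_range_pow_prod_dig {R : Type*} [CommSemiring R] (D : ℕ) (g : ℕ → ℕ → R) :
    ∑ n ∈ range (q ^ D), ∏ α ∈ Icc 1 D, g α (dig q n α) =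
      ∏ α ∈ Icc 1 D, ∑ x ∈ range q, g α x := by
  simp only [prod_Icc_one_eq_prod_fin, ← Fin.sum_univ_eq_sum_range, Fintype.prod_sum,
    dig_succ_eq_finFunctionFinEquiv_symm]
  exact finFunctionFinEquiv.symm.sum_comp fun f : Fin D → Fin q => ∏ k : Fin D, g (k + 1) (f k)

lemma dig_mod_pow (i : ℕ) {a k : ℕ} (hk : 1 ≤ k) (hka : k ≤ a) :
    dig q (i % q ^ a) k = dig q i k := by
  obtain ⟨b, rfl⟩ : ∃ b, a = (k - 1) + (b + 1) := ⟨a - k, by omega⟩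
  rw [dig, dig, pow_add, Nat.mod_mul_right_div_self,
    Nat.mod_mod_of_dvd _ (dvd_pow_self q b.succ_ne_zero)]

lemma dig_div_pow (i w : ℕ) {k : ℕ} (hk : 1 ≤ k) : dig q (i / q ^ w) k = dig q i (k + w) := by
  rw [dig, dig, Nat.div_div_eq_div_mul, ← pow_add]
  congr 3
  omega

lemma mod_add_dig_mul_add_div_mul (i : ℕ) {w : ℕ} (hw : 1 ≤ w) :
    i % q ^ (w - 1) + dig q i w * q ^ (w - 1) + i / q ^ w * q ^ w = i := by
  obtain ⟨k, rfl⟩ : ∃ k, w = k + 1 := ⟨w - 1, by omega⟩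
  have := Nat.mod_pow_succ (b := q) (x := i) (k := k)
  simp only [dig, Nat.add_sub_cancel] at this ⊢
  rw [mul_comm (i / q ^ k % q), ← this, Nat.mod_add_div']

end digits

section setDig

variable {q : ℕ}

/-- Replaces the `w`-th `q`-ary digit (1-indexed) of `i` by `y`. -/
def setDig (q i w y : ℕ) : ℕ := i % q ^ (w - 1) + y * q ^ (w - 1) + i / q ^ w * q ^ w

lemma mod_add_mul_lt (hq : 0 < q) (i : ℕ) {w y : ℕ} (hw : 1 ≤ w) (hy : y < q) :
    i % q ^ (w - 1) + y * q ^ (w - 1) < q ^ w := by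
  have hlow : i % q ^ (w - 1) < q ^ (w - 1) := Nat.mod_lt _ (Nat.pow_pos hq)
  have hpow : q ^ w = (q - 1) * q ^ (w - 1) + q ^ (w - 1) := by
    rw [← Nat.succ_mul, Nat.succ_eq_add_one, Nat.sub_add_cancel hq, ← pow_succ']
    congr 1
    omega
  nlinarith [Nat.mul_le_mul_right (q ^ (w - 1)) (Nat.le_sub_one_of_lt hy)]

lemma setDig_dig (i : ℕ) {w : ℕ} (hw : 1 ≤ w) : setDig q i w (dig q i w) = i :=
  mod_add_dig_mul_add_div_mul i hw

lemma setDig_add_dig_mul (i y : ℕ) {w : ℕ} (hw : 1 ≤ w) :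
    setDig q i w y + dig q i w * q ^ (w - 1) = i + y * q ^ (w - 1) := by
  have := mod_add_dig_mul_add_div_mul (q := q) i hw
  rw [setDig]
  omega

lemma setDig_add (i t y : ℕ) {w : ℕ} (hw : 1 ≤ w) (h : dig q i w = dig q (i + t) w) :
    setDig q i w y + t = setDig q (i + t) w y := by
  have h1 := setDig_add_dig_mul (q := q) i y hw
  have h2 := setDig_add_dig_mul (q := q) (i + t) y hw
  rw [← h] at h2
  omega

lemma setDig_div_pow (hq : 0 < q) (i : ℕ) {w y : ℕ} (hw : 1 ≤ w) (hy : y < q) :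
    setDig q i w y / q ^ w = i / q ^ w := by
  rw [setDig, Nat.add_mul_div_right _ _ (Nat.pow_pos hq),
    Nat.div_eq_of_lt (mod_add_mul_lt hq i hw hy), zero_add]

lemma setDig_mod_pow (i w y : ℕ) : setDig q i w y % q ^ (w - 1) = i % q ^ (w - 1) := by
  obtain ⟨c, hc⟩ : q ^ (w - 1) ∣ y * q ^ (w - 1) + i / q ^ w * q ^ w :=
    dvd_add (dvd_mul_left _ _) (dvd_mul_of_dvd_right (pow_dvd_pow q (Nat.sub_le w 1)) _)
  rw [setDig, add_assoc, hc, Nat.add_mul_mod_self_left, Nat.mod_mod]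

lemma dig_setDig_self (hq : 0 < q) (i : ℕ) {w y : ℕ} (hw : 1 ≤ w) (hy : y < q) :
    dig q (setDig q i w y) w = y := by
  have hsplit : setDig q i w y = i % q ^ (w - 1) + (y + q * (i / q ^ w)) * q ^ (w - 1) := by
    rw [setDig, add_mul, ← add_assoc, mul_comm q, mul_assoc, ← pow_succ', Nat.sub_add_cancel hw]
  rw [dig, hsplit, Nat.add_mul_div_right _ _ (Nat.pow_pos hq),
    Nat.div_eq_of_lt (Nat.mod_lt _ (Nat.pow_pos hq)), zero_add, Nat.add_mul_mod_self_left,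
    Nat.mod_eq_of_lt hy]

lemma dig_setDig_of_ne (hq : 0 < q) (i : ℕ) {w y k : ℕ} (hw : 1 ≤ w) (hy : y < q) (hk : 1 ≤ k)
    (hkw : k ≠ w) : dig q (setDig q i w y) k = dig q i k := by
  rcases Nat.lt_or_gt_of_ne hkw with hlt | hgt
  · rw [← dig_mod_pow _ hk (Nat.le_sub_one_of_lt hlt), setDig_mod_pow, dig_mod_pow _ hk]
    omega
  · obtain ⟨j, rfl⟩ : ∃ j, k = j + w := ⟨k - w, by omega⟩
    rw [← dig_div_pow _ _ (by omega), setDig_div_pow hq i hw hy, dig_div_pow _ _ (by omega)]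

lemma setDig_setDig (hq : 0 < q) (i z : ℕ) {w y : ℕ} (hw : 1 ≤ w) (hy : y < q) :
    setDig q (setDig q i w y) w z = setDig q i w z := by
  rw [setDig, setDig_mod_pow, setDig_div_pow hq i hw hy, setDig]

lemma setDig_lt (hq : 0 < q) {i m w y : ℕ} (hi : i < q ^ m) (hw : 1 ≤ w) (hwm : w ≤ m)
    (hy : y < q) : setDig q i w y < q ^ m := by
  have hpow : q ^ m = q ^ (m - w) * q ^ w := by rw [← pow_add, Nat.sub_add_cancel hwm]
  rw [hpow, ← Nat.div_lt_iff_lt_mul (Nat.pow_pos hq), setDig_div_pow hq i hw hy,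
    Nat.div_lt_iff_lt_mul (Nat.pow_pos hq), ← hpow]
  exact hi

end setDig

section pairing

variable {q : ℕ} {S : Finset ℕ} {W : ℕ → ℕ}

/- The map `(i, y) ↦ (setDig i (W i) y, dig i (W i))` is an involution of `S × [0, q)`,
which turns the sum over the orbits into `q` copies of the sum over `S`. -/
lemma card_nsmul_sum_eq_sum_sum_setDig {M : Type*} [AddCommMonoid M] (hq : 0 < q) (g : ℕ → M)
    (hW : ∀ i ∈ S, 1 ≤ W i) (hmem : ∀ i ∈ S, ∀ y < q, setDig q i (W i) y ∈ S)
    (hWinv : ∀ i ∈ S, ∀ y < q, W (setDig q i (W i) y) = W i) :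
    q • ∑ i ∈ S, g i = ∑ i ∈ S, ∑ y ∈ range q, g (setDig q i (W i) y) := by
  let Φ : ℕ × ℕ → ℕ × ℕ := fun x => (setDig q x.1 (W x.1) x.2, dig q x.1 (W x.1))
  have hΦ : ∀ x ∈ S ×ˢ range q, Φ x ∈ S ×ˢ range q := by
    rintro ⟨i, y⟩ hx
    rw [mem_product, mem_range] at hx ⊢
    exact ⟨hmem i hx.1 y hx.2, dig_lt hq _ _⟩
  have hΦΦ : ∀ x ∈ S ×ˢ range q, Φ (Φ x) = x := by
    rintro ⟨i, y⟩ hx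
    rw [mem_product, mem_range] at hx
    simp only [Φ, hWinv i hx.1 y hx.2, setDig_setDig hq i _ (hW i hx.1) hx.2,
      setDig_dig i (hW i hx.1), dig_setDig_self hq i (hW i hx.1) hx.2]
  calc q • ∑ i ∈ S, g i = ∑ x ∈ S ×ˢ range q, g x.1 := by
        rw [sum_product, smul_sum]
        simp
    _ = ∑ x ∈ S ×ˢ range q, g (Φ x).1 :=
        sum_nbij' Φ Φ hΦ hΦ hΦΦ hΦΦ fun x hx => by rw [hΦΦ x hx]
    _ = ∑ i ∈ S, ∑ y ∈ range q, g (setDig q i (W i) y) := sum_product _ _ _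

lemma sum_ec_eq_zero_of_setDig [NeZero q] {φ : ℕ → ZMod q}
    (hW : ∀ i ∈ S, 1 ≤ W i) (hmem : ∀ i ∈ S, ∀ y < q, setDig q i (W i) y ∈ S)
    (hWinv : ∀ i ∈ S, ∀ y < q, W (setDig q i (W i) y) = W i)
    (hφ : ∀ i ∈ S, ∃ A ≠ 0, ∀ y < q, φ (setDig q i (W i) y) = φ i + (y - dig q i (W i)) * A) :
    ∑ i ∈ S, ec q (φ i) = 0 := by
  have hq : 0 < q := Nat.pos_of_neZero q
  have horbit : ∀ i ∈ S, ∑ y ∈ range q, ec q (φ (setDig q i (W i) y)) = 0 := by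
    intro i hi
    obtain ⟨A, hA, hφA⟩ := hφ i hi
    calc ∑ y ∈ range q, ec q (φ (setDig q i (W i) y))
        = ∑ y ∈ range q, ec q (φ i - dig q i (W i) * A) * ec q (y * A) :=
          sum_congr rfl fun y hy => by
            rw [hφA y (mem_range.mp hy), ← ec_add]
            ring_nf
      _ = 0 := by rw [← mul_sum, sum_range_ec_natCast_mul, if_neg hA, mul_zero]
  have := card_nsmul_sum_eq_sum_sum_setDig hq (fun i => ec q (φ i)) hW hmem hWinv
  rw [sum_eq_zero horbit, nsmul_eq_mul] at this
  exact (mul_eq_zero.mp this).resolve_left (Nat.cast_ne_zero.mpr hq.ne')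

end pairing

lemma sum_mul_update_apply {ι R : Type*} [CommRing R] {s : Finset ι} {i₀ : ι} (hi₀ : i₀ ∈ s)
    (c : ι → R) {f : ι → ℕ} (hf : ∀ i ∈ s, f i = f i₀ → i = i₀) (x : ℕ → R) (z : R) :
    ∑ i ∈ s, c i * update x (f i₀) z (f i) = ∑ i ∈ s, c i * x (f i) + c i₀ * (z - x (f i₀)) := by
  rw [← sub_eq_iff_eq_add', ← sum_sub_distrib, sum_eq_single_of_mem i₀ hi₀]
  · rw [update_self]
    ring
  · intro i hi hne
    rw [update_of_ne fun he => hne (hf i hi he), sub_self]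

lemma update_apply_eq_update_apply_iff {R : Type*} {x y : ℕ → R} {w : ℕ} (hw : x w = y w)
    (z : R) (k : ℕ) : update x w z k = update y w z k ↔ x k = y k := by
  rcases eq_or_ne k w with rfl | hkw
  · simp [hw]
  · rw [update_of_ne hkw, update_of_ne hkw]

section blocks

variable {m d : ℕ} {mα : ℕ → ℕ} {π : ℕ → ℕ → ℕ}

def BlockMapsTo (m d : ℕ) (mα : ℕ → ℕ) (π : ℕ → ℕ → ℕ) : Prop :=
  ∀ α ∈ Icc 1 d, ∀ β ∈ Icc 1 (mα α), π α β ∈ Icc 1 m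

def BlockInjective (d : ℕ) (mα : ℕ → ℕ) (π : ℕ → ℕ → ℕ) : Prop :=
  ∀ α ∈ Icc 1 d, ∀ β ∈ Icc 1 (mα α), ∀ α' ∈ Icc 1 d, ∀ β' ∈ Icc 1 (mα α'),
    π α β = π α' β' → α = α' ∧ β = β'

lemma BlockMapsTo.exists_eq (hsum : ∑ α ∈ Icc 1 d, mα α = m) (hrange : BlockMapsTo m d mα π)
    (hinj : BlockInjective d mα π) {k : ℕ} (hk : k ∈ Icc 1 m) :
    ∃ α ∈ Icc 1 d, ∃ β ∈ Icc 1 (mα α), π α β = k := by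
  obtain ⟨⟨α, β⟩, hαβ, rfl⟩ := surj_on_of_inj_on_of_card_le
    (s := (Icc 1 d).sigma fun α => Icc 1 (mα α)) (fun x _ => π x.1 x.2)
    (fun x hx => hrange x.1 (mem_sigma.mp hx).1 x.2 (mem_sigma.mp hx).2)
    (fun x x' hx hx' he => by
      obtain ⟨h1, h2⟩ := hinj _ (mem_sigma.mp hx).1 _ (mem_sigma.mp hx).2 _
        (mem_sigma.mp hx').1 _ (mem_sigma.mp hx').2 he
      exact Sigma.ext h1 (heq_of_eq h2))
    (by simp [card_sigma, ← hsum]) k hk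
  exact ⟨α, (mem_sigma.mp hαβ).1, β, (mem_sigma.mp hαβ).2, rfl⟩

end blocks

section ebf

variable {q : ℕ}

/-- The digit vector of `i`, indexed by the 1-based digit positions; position `0` is unused and
set to `0`, so that `setDig` acts on digit vectors exactly as `Function.update`. -/
def digitVec (q i : ℕ) (k : ℕ) : ZMod q := if k = 0 then 0 else (dig q i k : ZMod q)

lemma digitVec_of_pos (i : ℕ) {k : ℕ} (hk : 1 ≤ k) : digitVec q i k = dig q i k :=
  if_neg (by omega)

lemma digitVec_setDig (hq : 0 < q) (i : ℕ) {w y : ℕ} (hw : 1 ≤ w) (hy : y < q) :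
    digitVec q (setDig q i w y) = update (digitVec q i) w (y : ZMod q) := by
  funext k
  rcases Nat.eq_zero_or_pos k with rfl | hk
  · simp [digitVec, update_of_ne (show 0 ≠ w by omega)]
  · rcases eq_or_ne k w with rfl | hkw
    · rw [update_self, digitVec_of_pos _ hk, dig_setDig_self hq i hk hy]
    · rw [update_of_ne hkw, digitVec_of_pos _ hk, digitVec_of_pos _ hk,
        dig_setDig_of_ne hq i hw hy hk hkw]

lemma exists_digitVec_ne (hq : 0 < q) {m i j : ℕ} (hi : i < q ^ m) (hj : j < q ^ m)
    (hij : i ≠ j) : ∃ k ∈ Icc 1 m, digitVec q i k ≠ digitVec q j k := by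
  by_contra! h
  refine hij (eq_of_dig_eq hi hj fun k hk => (natCast_dig_inj hq).mp ?_)
  simpa [digitVec_of_pos _ (mem_Icc.mp hk).1] using h k hk

lemma setDig_add_of_digitVec_eq (hq : 0 < q) {i t w : ℕ} (hw : 1 ≤ w)
    (h : digitVec q i w = digitVec q (i + t) w) (y : ℕ) :
    setDig q i w y + t = setDig q (i + t) w y := by
  rw [digitVec_of_pos _ hw, digitVec_of_pos _ hw, natCast_dig_inj hq] at h
  exact setDig_add i t y hw h

variable (m d : ℕ) (mα : ℕ → ℕ) (π : ℕ → ℕ → ℕ) (a : ℕ → ℕ → ℕ) (h : ℕ → ℕ → ZMod q)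
  (h0 : ZMod q)

def quadPart (x : ℕ → ZMod q) : ZMod q :=
  ∑ α ∈ Icc 1 d, ∑ β ∈ Icc 1 (mα α - 1), (a α β : ZMod q) * x (π α β) * x (π α (β + 1))

def powPart (x : ℕ → ZMod q) : ZMod q :=
  ∑ l ∈ Icc 1 (q - 1), ∑ u ∈ Icc 1 m, h u l * x u ^ l

/-- `f^p_n` as a function on all of `ℤ_q^ℕ`: `fpn` is `ebf` evaluated at digit vectors. -/
def ebf (p n : ℕ) (x : ℕ → ZMod q) : ZMod q :=
  quadPart d mα π a x + powPart m h x + h0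
  + ∑ α ∈ Icc 1 d, (dig q n α : ZMod q) * x (π α 1)
  + ∑ α ∈ Icc 1 d, (dig q p α : ZMod q) * x (π α (mα α))

variable {m d mα π a h h0}

lemma fpn_eq_ebf (hmα : ∀ α ∈ Icc 1 d, 1 ≤ mα α) (hrange : BlockMapsTo m d mα π) (p n i : ℕ) :
    fpn q m d mα π a h h0 p n i = ebf m d mα π a h h0 p n (digitVec q i) := by
  have hpos : ∀ α ∈ Icc 1 d, ∀ β ∈ Icc 1 (mα α), digitVec q i (π α β) = dig q i (π α β) :=
    fun α hα β hβ => digitVec_of_pos i (mem_Icc.mp (hrange α hα β hβ)).1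
  have hfirst : ∀ α ∈ Icc 1 d, 1 ∈ Icc 1 (mα α) := fun α hα => mem_Icc.mpr ⟨le_rfl, hmα α hα⟩
  have hlast : ∀ α ∈ Icc 1 d, mα α ∈ Icc 1 (mα α) := fun α hα => mem_Icc.mpr ⟨hmα α hα, le_rfl⟩
  have hinner : ∀ α ∈ Icc 1 d, ∀ β ∈ Icc 1 (mα α - 1),
      β ∈ Icc 1 (mα α) ∧ β + 1 ∈ Icc 1 (mα α) :=
    fun α _ β hβ => by simp only [mem_Icc] at hβ ⊢; omega
  simp only [fpn, ebf, quadPart, powPart]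
  congr 1
  · congr 1
    · congr 2
      · refine sum_congr rfl fun α hα => sum_congr rfl fun β hβ => ?_
        rw [hpos α hα β (hinner α hα β hβ).1, hpos α hα _ (hinner α hα β hβ).2]
      · exact sum_congr rfl fun l _ => sum_congr rfl fun u hu => by
          rw [digitVec_of_pos i (mem_Icc.mp hu).1]
    · exact sum_congr rfl fun α hα => by rw [hpos α hα 1 (hfirst α hα)]
  · exact sum_congr rfl fun α hα => by rw [hpos α hα _ (hlast α hα)]

lemma ebf_sub_ebf (p p' n : ℕ) (x y : ℕ → ZMod q) :
    ebf m d mα π a h h0 p n x - ebf m d mα π a h h0 p' n y =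
      ebf m d mα π a h h0 p 0 x - ebf m d mα π a h h0 p' 0 y
        + ∑ α ∈ Icc 1 d, (dig q n α : ZMod q) * (x (π α 1) - y (π α 1)) := by
  simp only [ebf, dig_zero_left, Nat.cast_zero, zero_mul, sum_const_zero, mul_sub,
    sum_sub_distrib]
  ring

lemma ebf_sub_ebf_self (p p' : ℕ) (x : ℕ → ZMod q) :
    ebf m d mα π a h h0 p 0 x - ebf m d mα π a h h0 p' 0 x =
      ∑ α ∈ Icc 1 d, ((dig q p α : ZMod q) - dig q p' α) * x (π α (mα α)) := by
  simp only [ebf, sub_mul, sum_sub_distrib]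
  ring

lemma sum_range_ec_ebf_sub_ebf [NeZero q] (p p' : ℕ) (x y : ℕ → ZMod q) :
    ∑ n ∈ range (q ^ d), ec q (ebf m d mα π a h h0 p n x - ebf m d mα π a h h0 p' n y) =
      if ∀ α ∈ Icc 1 d, x (π α 1) = y (π α 1) then
        (q : ℂ) ^ d * ec q (ebf m d mα π a h h0 p 0 x - ebf m d mα π a h h0 p' 0 y)
      else 0 := by
  rw [sum_congr rfl fun n _ => by rw [ebf_sub_ebf p p' n x y, ec_add, ec_sum], ← mul_sum,
    sum_range_pow_prod_dig d (fun α r => ec q (r * (x (π α 1) - y (π α 1))))]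
  simp only [sum_range_ec_natCast_mul, prod_ite_zero, prod_const, Nat.card_Icc,
    Nat.add_sub_cancel, sub_eq_zero]
  split_ifs <;> ring

lemma powPart_update_sub_update {x y : ℕ → ZMod q} {w : ℕ} (hw : x w = y w) (z : ZMod q) :
    powPart m h (update x w z) - powPart m h (update y w z) = powPart m h x - powPart m h y := by
  simp only [powPart, ← sum_sub_distrib]
  refine sum_congr rfl fun l _ => sum_congr rfl fun u _ => ?_
  rcases eq_or_ne u w with rfl | huw
  · rw [update_self, update_self, hw]
    ring
  · rw [update_of_ne huw, update_of_ne huw]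

/- Overwriting the coordinate `w = π α₀ (β₀ - 1)` of two vectors that agree on the
positions `π α₀ β` with `β < β₀` only affects the term `a_{α₀,β₀-1} x_w x_{π α₀ β₀}`: its other
neighbour `π α₀ (β₀ - 2)` carries the same value in both vectors. -/
lemma quadPart_update_sub_update (hinj : BlockInjective d mα π) {α₀ β₀ : ℕ}
    (hα₀ : α₀ ∈ Icc 1 d) (hβ₀ : β₀ ∈ Icc 2 (mα α₀)) {x y : ℕ → ZMod q}
    (hagree : ∀ β ∈ Icc 1 (mα α₀), β < β₀ → x (π α₀ β) = y (π α₀ β)) (z : ZMod q) :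
    quadPart d mα π a (update x (π α₀ (β₀ - 1)) z)
        - quadPart d mα π a (update y (π α₀ (β₀ - 1)) z) =
      quadPart d mα π a x - quadPart d mα π a y
        + a α₀ (β₀ - 1) * (z - x (π α₀ (β₀ - 1))) * (x (π α₀ β₀) - y (π α₀ β₀)) := by
  set w := π α₀ (β₀ - 1)
  rw [mem_Icc] at hβ₀
  have hpred : β₀ - 1 ∈ Icc 1 (mα α₀) := mem_Icc.mpr ⟨by omega, by omega⟩
  have hw : x w = y w := hagree _ hpred (by omega)
  have hw_iff : ∀ α ∈ Icc 1 d, ∀ β ∈ Icc 1 (mα α), π α β = w → α = α₀ ∧ β = β₀ - 1 :=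
    fun α hα β hβ he => hinj α hα β hβ α₀ hα₀ _ hpred he
  have hterm : ∀ α ∈ Icc 1 d, ∀ β ∈ Icc 1 (mα α - 1),
      (a α β : ZMod q) * update x w z (π α β) * update x w z (π α (β + 1))
        - a α β * update y w z (π α β) * update y w z (π α (β + 1)) =
      (a α β * x (π α β) * x (π α (β + 1)) - a α β * y (π α β) * y (π α (β + 1)))
        + if α = α₀ ∧ β = β₀ - 1 then
            a α₀ (β₀ - 1) * (z - x w) * (x (π α₀ β₀) - y (π α₀ β₀)) else 0 := by
    intro α hα β hβ
    rw [mem_Icc] at hβ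
    have hβ₁ : β ∈ Icc 1 (mα α) := mem_Icc.mpr ⟨hβ.1, by omega⟩
    have hβ₂ : β + 1 ∈ Icc 1 (mα α) := mem_Icc.mpr ⟨by omega, by omega⟩
    split_ifs with hαβ
    · obtain ⟨rfl, rfl⟩ := hαβ
      have hv : π α (β₀ - 1 + 1) ≠ w := fun he => by have := (hw_iff α hα _ hβ₂ he).2; omega
      rw [update_self, update_self, update_of_ne hv, update_of_ne hv,
        Nat.sub_add_cancel (by omega), hw]
      ring
    · have hu : π α β ≠ w := fun he => hαβ (hw_iff α hα β hβ₁ he)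
      rw [update_of_ne hu, update_of_ne hu]
      by_cases hv : π α (β + 1) = w
      · obtain ⟨rfl, hβw⟩ := hw_iff α hα _ hβ₂ hv
        rw [hv, update_self, update_self, hagree β hβ₁ (by omega), hw]
        ring
      · rw [update_of_ne hv, update_of_ne hv, add_zero]
  simp only [quadPart, ← sum_sub_distrib]
  rw [sum_congr rfl fun α hα => sum_congr rfl (hterm α hα)]
  simp [sum_add_distrib, ite_and, sum_ite_irrel, hα₀, show 1 ≤ β₀ - 1 by omega,
    show β₀ ≤ mα α₀ - 1 + 1 by omega]

lemma ebf_update_sub_update (hmα : ∀ α ∈ Icc 1 d, 1 ≤ mα α) (hinj : BlockInjective d mα π)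
    {α₀ β₀ : ℕ} (hα₀ : α₀ ∈ Icc 1 d) (hβ₀ : β₀ ∈ Icc 2 (mα α₀)) {x y : ℕ → ZMod q}
    (hagree : ∀ β ∈ Icc 1 (mα α₀), β < β₀ → x (π α₀ β) = y (π α₀ β)) (p p' : ℕ) (z : ZMod q) :
    ebf m d mα π a h h0 p 0 (update x (π α₀ (β₀ - 1)) z)
        - ebf m d mα π a h h0 p' 0 (update y (π α₀ (β₀ - 1)) z) =
      ebf m d mα π a h h0 p 0 x - ebf m d mα π a h h0 p' 0 y
        + a α₀ (β₀ - 1) * (z - x (π α₀ (β₀ - 1))) * (x (π α₀ β₀) - y (π α₀ β₀)) := by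
  rw [mem_Icc] at hβ₀
  have hpred : β₀ - 1 ∈ Icc 1 (mα α₀) := mem_Icc.mpr ⟨by omega, by omega⟩
  have hlast : ∀ (r : ℕ) (u : ℕ → ZMod q),
      ∑ α ∈ Icc 1 d, (dig q r α : ZMod q) * update u (π α₀ (β₀ - 1)) z (π α (mα α)) =
        ∑ α ∈ Icc 1 d, (dig q r α : ZMod q) * u (π α (mα α)) := by
    refine fun r u => sum_congr rfl fun α hα => ?_
    have hne : π α (mα α) ≠ π α₀ (β₀ - 1) := fun he => by
      obtain ⟨rfl, _⟩ := hinj α hα _ (mem_Icc.mpr ⟨hmα α hα, le_rfl⟩) α₀ hα₀ _ hpred he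
      omega
    rw [update_of_ne hne]
  have hQ := quadPart_update_sub_update (a := a) hinj hα₀ (mem_Icc.mpr hβ₀) hagree z
  have hH := powPart_update_sub_update (m := m) (h := h) (hagree _ hpred (by omega)) z
  simp only [ebf, dig_zero_left, Nat.cast_zero, zero_mul, sum_const_zero, hlast]
  linear_combination hQ + hH

end ebf

section pivot

variable {R : Type*} {d : ℕ} {mα : ℕ → ℕ} {π : ℕ → ℕ → ℕ}

noncomputable def pivotBlock (d : ℕ) (mα : ℕ → ℕ) (π : ℕ → ℕ → ℕ) (x y : ℕ → R) : ℕ :=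
  sInf {α | α ∈ Icc 1 d ∧ ∃ β ∈ Icc 1 (mα α), x (π α β) ≠ y (π α β)}

noncomputable def pivotIndex (d : ℕ) (mα : ℕ → ℕ) (π : ℕ → ℕ → ℕ) (x y : ℕ → R) : ℕ :=
  sInf {β | β ∈ Icc 1 (mα (pivotBlock d mα π x y)) ∧
    x (π (pivotBlock d mα π x y) β) ≠ y (π (pivotBlock d mα π x y) β)}

lemma pivot_spec {x y : ℕ → R}
    (hxy : ∃ α ∈ Icc 1 d, ∃ β ∈ Icc 1 (mα α), x (π α β) ≠ y (π α β)) :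
    pivotBlock d mα π x y ∈ Icc 1 d ∧
      pivotIndex d mα π x y ∈ Icc 1 (mα (pivotBlock d mα π x y)) ∧
      x (π (pivotBlock d mα π x y) (pivotIndex d mα π x y)) ≠
        y (π (pivotBlock d mα π x y) (pivotIndex d mα π x y)) ∧
      ∀ β ∈ Icc 1 (mα (pivotBlock d mα π x y)), β < pivotIndex d mα π x y →
        x (π (pivotBlock d mα π x y) β) = y (π (pivotBlock d mα π x y) β) := by
  obtain ⟨hblock, hne⟩ := Nat.sInf_mem (s := {α | α ∈ Icc 1 d ∧ ∃ β ∈ Icc 1 (mα α),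
    x (π α β) ≠ y (π α β)}) hxy
  obtain ⟨hindex, hpiv⟩ := Nat.sInf_mem (s := {β | β ∈ Icc 1 (mα (pivotBlock d mα π x y)) ∧
    x (π (pivotBlock d mα π x y) β) ≠ y (π (pivotBlock d mα π x y) β)}) hne
  exact ⟨hblock, hindex, hpiv, fun β hβ hlt => not_not.mp fun hβne =>
    Nat.notMem_of_lt_sInf hlt ⟨hβ, hβne⟩⟩

lemma two_le_pivotIndex {x y : ℕ → R}
    (hxy : ∃ α ∈ Icc 1 d, ∃ β ∈ Icc 1 (mα α), x (π α β) ≠ y (π α β))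
    (hfirst : ∀ α ∈ Icc 1 d, x (π α 1) = y (π α 1)) : 2 ≤ pivotIndex d mα π x y := by
  obtain ⟨hα₀, hβ₀, hne₀, -⟩ := pivot_spec hxy
  by_contra hlt
  have hone : pivotIndex d mα π x y = 1 := by have := (mem_Icc.mp hβ₀).1; omega
  exact hne₀ (by rw [hone]; exact hfirst _ hα₀)

lemma pivotBlock_update {x y : ℕ → R} {w : ℕ} (hw : x w = y w) (z : R) :
    pivotBlock d mα π (update x w z) (update y w z) = pivotBlock d mα π x y := by
  simp only [pivotBlock, ne_eq, update_apply_eq_update_apply_iff hw]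

lemma pivotIndex_update {x y : ℕ → R} {w : ℕ} (hw : x w = y w) (z : R) :
    pivotIndex d mα π (update x w z) (update y w z) = pivotIndex d mα π x y := by
  simp only [pivotIndex, pivotBlock_update hw, ne_eq, update_apply_eq_update_apply_iff hw]

noncomputable def pivotPos (d : ℕ) (mα : ℕ → ℕ) (π : ℕ → ℕ → ℕ) (x y : ℕ → R) : ℕ :=
  π (pivotBlock d mα π x y) (pivotIndex d mα π x y - 1)

lemma pivotPos_update {x y : ℕ → R} {w : ℕ} (hw : x w = y w) (z : R) :
    pivotPos d mα π (update x w z) (update y w z) = pivotPos d mα π x y := by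
  rw [pivotPos, pivotPos, pivotBlock_update hw, pivotIndex_update hw]

lemma pivotPos_spec {m : ℕ} (hrange : BlockMapsTo m d mα π) {x y : ℕ → R}
    (hxy : ∃ α ∈ Icc 1 d, ∃ β ∈ Icc 1 (mα α), x (π α β) ≠ y (π α β))
    (hfirst : ∀ α ∈ Icc 1 d, x (π α 1) = y (π α 1)) :
    pivotPos d mα π x y ∈ Icc 1 m ∧ x (pivotPos d mα π x y) = y (pivotPos d mα π x y) := by
  obtain ⟨hα₀, hβ₀, -, hbelow⟩ := pivot_spec hxy
  have h2 := two_le_pivotIndex hxy hfirst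
  have hpred : pivotIndex d mα π x y - 1 ∈ Icc 1 (mα (pivotBlock d mα π x y)) :=
    mem_Icc.mpr ⟨by omega, by have := (mem_Icc.mp hβ₀).2; omega⟩
  exact ⟨hrange _ hα₀ _ hpred, hbelow _ hpred (by omega)⟩

lemma exists_ebf_update_pivotPos {q m : ℕ} {a : ℕ → ℕ → ℕ} {h : ℕ → ℕ → ZMod q}
    {h0 : ZMod q} (hmα : ∀ α ∈ Icc 1 d, 1 ≤ mα α) (hinj : BlockInjective d mα π)
    (hacop : ∀ α ∈ Icc 1 d, ∀ β ∈ Icc 1 (mα α - 1), Nat.Coprime (a α β) q) {x y : ℕ → ZMod q}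
    (hxy : ∃ α ∈ Icc 1 d, ∃ β ∈ Icc 1 (mα α), x (π α β) ≠ y (π α β))
    (hfirst : ∀ α ∈ Icc 1 d, x (π α 1) = y (π α 1)) (p p' : ℕ) :
    ∃ A ≠ 0, ∀ z, ebf m d mα π a h h0 p 0 (update x (pivotPos d mα π x y) z)
        - ebf m d mα π a h h0 p' 0 (update y (pivotPos d mα π x y) z) =
      ebf m d mα π a h h0 p 0 x - ebf m d mα π a h h0 p' 0 y
        + (z - x (pivotPos d mα π x y)) * A := by
  obtain ⟨hα₀, hβ₀, hne₀, hbelow⟩ := pivot_spec hxy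
  have h2 := two_le_pivotIndex hxy hfirst
  have hβ₀' : pivotIndex d mα π x y ∈ Icc 2 (mα (pivotBlock d mα π x y)) :=
    mem_Icc.mpr ⟨h2, (mem_Icc.mp hβ₀).2⟩
  have hunit : IsUnit (a (pivotBlock d mα π x y) (pivotIndex d mα π x y - 1) : ZMod q) := by
    simpa using (ZMod.unitOfCoprime _ (hacop _ hα₀ _
      (mem_Icc.mpr ⟨by omega, by have := (mem_Icc.mp hβ₀).2; omega⟩))).isUnit
  refine ⟨_, by rw [Ne, hunit.mul_right_eq_zero, sub_eq_zero]; exact hne₀, fun z => ?_⟩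
  rw [pivotPos, ebf_update_sub_update hmα hinj hα₀ hβ₀' hbelow]
  ring

end pivot

section correlation

variable {q m d : ℕ} [NeZero q] {mα : ℕ → ℕ} {π : ℕ → ℕ → ℕ} {a : ℕ → ℕ → ℕ}
  {h : ℕ → ℕ → ZMod q} {h0 : ZMod q}

lemma exists_digitVec_pi_ne (hsum : ∑ α ∈ Icc 1 d, mα α = m) (hrange : BlockMapsTo m d mα π)
    (hinj : BlockInjective d mα π) {i j : ℕ} (hi : i < q ^ m) (hj : j < q ^ m) (hij : i ≠ j) :
    ∃ α ∈ Icc 1 d, ∃ β ∈ Icc 1 (mα α), digitVec q i (π α β) ≠ digitVec q j (π α β) := by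
  obtain ⟨k, hk, hne⟩ := exists_digitVec_ne (Nat.pos_of_neZero q) hi hj hij
  obtain ⟨α, hα, β, hβ, rfl⟩ := hrange.exists_eq hsum hinj hk
  exact ⟨α, hα, β, hβ, hne⟩

lemma sum_ec_ebf_sub_ebf_eq_zero (hmα : ∀ α ∈ Icc 1 d, 1 ≤ mα α)
    (hrange : BlockMapsTo m d mα π) (hinj : BlockInjective d mα π)
    {p p' : ℕ} (hp : p < q ^ d) (hp' : p' < q ^ d) (hpp' : p ≠ p') :
    ∑ i ∈ range (q ^ m), ec q (ebf m d mα π a h h0 p 0 (digitVec q i)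
      - ebf m d mα π a h h0 p' 0 (digitVec q i)) = 0 := by
  have hq : 0 < q := Nat.pos_of_neZero q
  obtain ⟨α', hα', hne⟩ := exists_digitVec_ne hq hp hp' hpp'
  rw [digitVec_of_pos _ (mem_Icc.mp hα').1, digitVec_of_pos _ (mem_Icc.mp hα').1] at hne
  have hlast : ∀ α ∈ Icc 1 d, mα α ∈ Icc 1 (mα α) := fun α hα => mem_Icc.mpr ⟨hmα α hα, le_rfl⟩
  set w := π α' (mα α')
  have hw := mem_Icc.mp (hrange α' hα' _ (hlast α' hα'))
  simp only [ebf_sub_ebf_self]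
  refine sum_ec_eq_zero_of_setDig (W := fun _ => w) (fun _ _ => hw.1)
    (fun i hi y hy => mem_range.mpr (setDig_lt hq (mem_range.mp hi) hw.1 hw.2 hy))
    (fun _ _ _ _ => rfl) fun i _ => ⟨_, sub_ne_zero.mpr hne, fun y hy => ?_⟩
  rw [digitVec_setDig hq i hw.1 hy, sum_mul_update_apply hα' _ (fun α hα he =>
    (hinj α hα _ (hlast α hα) α' hα' _ (hlast α' hα') he).1), digitVec_of_pos i hw.1]
  ring

lemma sum_ec_ebf_sub_ebf_shift_eq_zero (hmα : ∀ α ∈ Icc 1 d, 1 ≤ mα α)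
    (hsum : ∑ α ∈ Icc 1 d, mα α = m) (hrange : BlockMapsTo m d mα π)
    (hinj : BlockInjective d mα π)
    (hacop : ∀ α ∈ Icc 1 d, ∀ β ∈ Icc 1 (mα α - 1), Nat.Coprime (a α β) q)
    {t : ℕ} (ht₀ : 0 < t) (ht : t < q ^ m) {S : Finset ℕ}
    (hS : ∀ i, i ∈ S ↔ i < q ^ m - t ∧
      ∀ α ∈ Icc 1 d, digitVec q i (π α 1) = digitVec q (i + t) (π α 1)) (p p' : ℕ) :
    ∑ i ∈ S, ec q (ebf m d mα π a h h0 p 0 (digitVec q i)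
        - ebf m d mα π a h h0 p' 0 (digitVec q (i + t))) = 0 := by
  have hq : 0 < q := Nat.pos_of_neZero q
  let W : ℕ → ℕ := fun i => pivotPos d mα π (digitVec q i) (digitVec q (i + t))
  have hxy : ∀ i ∈ S, ∃ α ∈ Icc 1 d, ∃ β ∈ Icc 1 (mα α),
      digitVec q i (π α β) ≠ digitVec q (i + t) (π α β) := fun i hi => by
    rw [hS] at hi
    exact exists_digitVec_pi_ne hsum hrange hinj (by omega) (by omega) (by omega)
  have hW : ∀ i ∈ S, W i ∈ Icc 1 m ∧ digitVec q i (W i) = digitVec q (i + t) (W i) :=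
    fun i hi => pivotPos_spec hrange (hxy i hi) ((hS i).mp hi).2
  have hupdate : ∀ i ∈ S, ∀ y < q,
      digitVec q (setDig q i (W i) y) = update (digitVec q i) (W i) (y : ZMod q) ∧
      digitVec q (setDig q i (W i) y + t) = update (digitVec q (i + t)) (W i) (y : ZMod q) := by
    intro i hi y hy
    have hw := (mem_Icc.mp (hW i hi).1).1
    exact ⟨digitVec_setDig hq i hw hy, by
      rw [setDig_add_of_digitVec_eq hq hw (hW i hi).2, digitVec_setDig hq _ hw hy]⟩
  refine sum_ec_eq_zero_of_setDig (W := W) (fun i hi => (mem_Icc.mp (hW i hi).1).1)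
    (fun i hi y hy => ?_) (fun i hi y hy => ?_) (fun i hi => ?_)
  · obtain ⟨hWm, hWeq⟩ := hW i hi
    rw [mem_Icc] at hWm
    have hi' := (hS i).mp hi
    have hlt := setDig_lt hq (show i + t < q ^ m by omega) hWm.1 hWm.2 hy
    rw [← setDig_add_of_digitVec_eq hq hWm.1 hWeq] at hlt
    refine (hS _).mpr ⟨by omega, fun α hα => ?_⟩
    rw [(hupdate i hi y hy).1, (hupdate i hi y hy).2, update_apply_eq_update_apply_iff hWeq]
    exact hi'.2 α hα
  · simp only [W, (hupdate i hi y hy).1, (hupdate i hi y hy).2, pivotPos_update (hW i hi).2]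
  · obtain ⟨A, hA, hφA⟩ := exists_ebf_update_pivotPos (h := h) (h0 := h0) (m := m) hmα hinj
      hacop (hxy i hi) ((hS i).mp hi).2 p p'
    refine ⟨A, hA, fun y hy => ?_⟩
    rw [(hupdate i hi y hy).1, (hupdate i hi y hy).2, hφA,
      digitVec_of_pos i (mem_Icc.mp (hW i hi).1).1]

lemma sum_sum_ec_fpn_sub_fpn_shift_eq_zero (hmα : ∀ α ∈ Icc 1 d, 1 ≤ mα α)
    (hsum : ∑ α ∈ Icc 1 d, mα α = m) (hrange : BlockMapsTo m d mα π)
    (hinj : BlockInjective d mα π)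
    (hacop : ∀ α ∈ Icc 1 d, ∀ β ∈ Icc 1 (mα α - 1), Nat.Coprime (a α β) q)
    {p p' t : ℕ} (hp : p < q ^ d) (hp' : p' < q ^ d) (ht : t < q ^ m) (hne : p ≠ p' ∨ t ≠ 0) :
    ∑ n ∈ range (q ^ d), ∑ i ∈ range (q ^ m - t),
      ec q (fpn q m d mα π a h h0 p n i - fpn q m d mα π a h h0 p' n (i + t)) = 0 := by
  rw [sum_comm]
  simp only [fpn_eq_ebf hmα hrange, sum_range_ec_ebf_sub_ebf, ← sum_filter, ← mul_sum]
  refine mul_eq_zero_of_right _ ?_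
  rcases Nat.eq_zero_or_pos t with rfl | ht₀
  · simpa using sum_ec_ebf_sub_ebf_eq_zero hmα hrange hinj hp hp' (by simpa using hne)
  · exact sum_ec_ebf_sub_ebf_shift_eq_zero hmα hsum hrange hinj hacop ht₀ ht
      (fun i => by rw [mem_filter, mem_range]) p p'

end correlation

theorem stmt10_general (q m d : ℕ) (hq : 2 ≤ q)
    (mα : ℕ → ℕ) (hmα : ∀ α ∈ Finset.Icc 1 d, 1 ≤ mα α)
    (hsum : ∑ α ∈ Finset.Icc 1 d, mα α = m)
    (π : ℕ → ℕ → ℕ)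
    (hrange : ∀ α ∈ Finset.Icc 1 d, ∀ β ∈ Finset.Icc 1 (mα α), π α β ∈ Finset.Icc 1 m)
    (hinj : ∀ α ∈ Finset.Icc 1 d, ∀ β ∈ Finset.Icc 1 (mα α), ∀ α' ∈ Finset.Icc 1 d,
      ∀ β' ∈ Finset.Icc 1 (mα α'), π α β = π α' β' → α = α' ∧ β = β')
    (a : ℕ → ℕ → ℕ)
    (hacop : ∀ α ∈ Finset.Icc 1 d, ∀ β ∈ Finset.Icc 1 (mα α - 1), Nat.Coprime (a α β) q)
    (h : ℕ → ℕ → ZMod q) (h0 : ZMod q) :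
    ∀ p < q ^ d, ∀ p' < q ^ d, ∀ τ : ℤ, |τ| ≤ (q : ℤ) ^ m - 1 → (p ≠ p' ∨ τ ≠ 0) →
      ∑ n ∈ Finset.range (q ^ d),
        Rq q (q ^ m) (fpn q m d mα π a h h0 p n) (fpn q m d mα π a h h0 p' n) τ = 0 := by
  intro p hp p' hp' τ hτ hne
  have : NeZero q := ⟨by omega⟩
  have hqm : ((q ^ m : ℕ) : ℤ) = (q : ℤ) ^ m := Nat.cast_pow q m
  rcases le_or_gt 0 τ with hτ₀ | hτ₀
  · simp only [Rq, if_pos hτ₀]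
    exact sum_sum_ec_fpn_sub_fpn_shift_eq_zero hmα hsum hrange hinj hacop hp hp'
      (by rw [abs_of_nonneg hτ₀] at hτ; omega) (by omega)
  · simp only [Rq, if_neg (not_le.mpr hτ₀)]
    rw [sum_congr rfl fun n _ => sum_congr rfl fun i _ => ec_sub_eq_conj _ _]
    simp only [← map_sum]
    rw [sum_sum_ec_fpn_sub_fpn_shift_eq_zero hmα hsum hrange hinj hacop hp' hp
      (by rw [abs_of_neg hτ₀] at hτ; omega) (by omega), map_zero]

/-- Theorem 8: the family `{F^0,…,F^{q^d-1}}` is a `(q^d, q^d, q^m)`-CCC. -/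
theorem stmt10 (q m d : ℕ) (hq : 2 ≤ q) (hm : 2 ≤ m) (hd : 2 ≤ d) (hdm : d < m)
    (mα : ℕ → ℕ) (hmα : ∀ α ∈ Finset.Icc 1 d, 1 ≤ mα α)
    (hsum : ∑ α ∈ Finset.Icc 1 d, mα α = m)
    (π : ℕ → ℕ → ℕ)
    (hrange : ∀ α ∈ Finset.Icc 1 d, ∀ β ∈ Finset.Icc 1 (mα α), π α β ∈ Finset.Icc 1 m)
    (hinj : ∀ α ∈ Finset.Icc 1 d, ∀ β ∈ Finset.Icc 1 (mα α), ∀ α' ∈ Finset.Icc 1 d,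
      ∀ β' ∈ Finset.Icc 1 (mα α'), π α β = π α' β' → α = α' ∧ β = β')
    (a : ℕ → ℕ → ℕ)
    (hacop : ∀ α ∈ Finset.Icc 1 d, ∀ β ∈ Finset.Icc 1 (mα α - 1), Nat.Coprime (a α β) q)
    (h : ℕ → ℕ → ZMod q) (h0 : ZMod q) :
    ∀ p < q ^ d, ∀ p' < q ^ d, ∀ τ : ℤ, |τ| ≤ (q : ℤ) ^ m - 1 → (p ≠ p' ∨ τ ≠ 0) →
      ∑ n ∈ Finset.range (q ^ d),
        Rq q (q ^ m) (fpn q m d mα π a h h0 p n) (fpn q m d mα π a h h0 p' n) τ = 0 :=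
  stmt10_general q m d hq mα hmα hsum π hrange hinj a hacop h h0
end

section
/- Let q ≥ 2 and L = a_m q^{m-1} + Σ_{k=1}^{v-1} a_k q^{m-v+k-1} + q^u where a_m ∈ {1,…,q-1}, a_k ∈ {0,…,q-1}, and u < m - v. Suppose i < L has q-ary digits satisfying i_m = a_m and i_{m-v+k} = a_k for all k = 1,…,v-1 with every a_k ≠ 0. Then i_s = 0 for all s with u+1 ≤ s ≤ m-v-1, and hence i ≤ a_m q^{m-1} + Σ_{k=1}^{v-1} a_k q^{m-v+k-1} + q^u - 1; moreover any integer i^{(t)} obtained from i by modifying a single q-ary digit in a position ≤ u (adding t mod q) still satisfies i^{(t)} < L. -/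
/-!
Put `M = m - v`. The prescribed top digits make the high part `H = a_m q^(m-1) + Σ a_k q^(m-v+k-1)`
a lower bound for `i`, and `H` is a multiple of `q^M`. Hence `H ≤ i < H + q^u` with `u < M`: the
digits of `i` in positions `u+1, …, M` are those of `H`, i.e. zero; and changing a digit in a
position `k ≤ u` keeps `i` in its block `[j q^k, (j+1) q^k)`, which ends at or below the multiple
`H + q^u` of `q^k`.
-/

open Finset

/-- The natural number obtained from `i` by replacing its `k`-th `q`-ary digit `d`
by `(d + t) mod q`, all other digits unchanged. -/
def modifyDigit (q i k t : ℕ) : ℕ :=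
  i - dig q i k * q ^ (k - 1) + (dig q i k + t) % q * q ^ (k - 1)

lemma mod_pow_add_sum_dig (q n M w : ℕ) :
    n % q ^ M + ∑ k ∈ Icc 1 w, dig q n (M + k) * q ^ (M + k - 1) = n % q ^ (M + w) := by
  induction w with
  | zero => simp
  | succ w ih =>
    rw [sum_Icc_succ_top (by omega), ← add_assoc, ih, ← add_assoc, Nat.mod_pow_succ, dig,
      Nat.add_sub_cancel, mul_comm]

lemma dig_eq_zero_of_dvd {q H n s : ℕ} (hq : 0 < q) (hs : 1 ≤ s) (hH : q ^ s ∣ H)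
    (hHn : H ≤ n) (hn : n < H + q ^ (s - 1)) : dig q n s = 0 := by
  obtain ⟨K, rfl⟩ := hH
  obtain ⟨e, rfl⟩ : ∃ e, s = e + 1 := ⟨s - 1, by omega⟩
  obtain ⟨r, rfl⟩ := Nat.exists_eq_add_of_le hHn
  have hdiv : (q ^ (e + 1) * K + r) / q ^ e = q * K := by
    rw [add_comm, pow_succ, mul_assoc, Nat.add_mul_div_left _ _ (by positivity),
      Nat.div_eq_of_lt (by simpa using hn), zero_add]
  rw [dig, Nat.add_sub_cancel, hdiv, Nat.mul_mod_right]

lemma modifyDigit_eq (q n e t : ℕ) :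
    modifyDigit q n (e + 1) t =
      q ^ (e + 1) * (n / q ^ (e + 1)) + n % q ^ e + q ^ e * ((dig q n (e + 1) + t) % q) := by
  have hn := Nat.div_add_mod n (q ^ (e + 1))
  rw [Nat.mod_pow_succ] at hn
  rw [modifyDigit, dig, Nat.add_sub_cancel, Nat.mul_comm (n / q ^ e % q),
    Nat.mul_comm ((n / q ^ e % q + t) % q)]
  generalize n % q ^ e = R at hn ⊢
  omega

lemma modifyDigit_lt_of_dvd {q n k L : ℕ} (t : ℕ) (hq : 0 < q) (hk : 1 ≤ k) (hn : n < L)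
    (hL : q ^ k ∣ L) : modifyDigit q n k t < L := by
  obtain ⟨e, rfl⟩ : ∃ e, k = e + 1 := ⟨k - 1, by omega⟩
  have hA : n / q ^ (e + 1) + 1 ≤ L / q ^ (e + 1) := Nat.div_lt_div_of_lt_of_dvd hL hn
  have hlow : n % q ^ e + q ^ e * ((dig q n (e + 1) + t) % q) < q ^ (e + 1) := by
    have hr : n % q ^ e < q ^ e := Nat.mod_lt _ (by positivity)
    have hd : (dig q n (e + 1) + t) % q + 1 ≤ q := Nat.mod_lt _ hq
    calc n % q ^ e + q ^ e * ((dig q n (e + 1) + t) % q)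
        < q ^ e * ((dig q n (e + 1) + t) % q + 1) := by rw [mul_add_one]; omega
      _ ≤ q ^ e * q := by gcongr
      _ = q ^ (e + 1) := (pow_succ q e).symm
  calc modifyDigit q n (e + 1) t < q ^ (e + 1) * (n / q ^ (e + 1) + 1) := by
        rw [modifyDigit_eq, mul_add_one]; omega
    _ ≤ q ^ (e + 1) * (L / q ^ (e + 1)) := by gcongr
    _ = L := Nat.mul_div_cancel' hL

def highPart (q m v am : ℕ) (a : ℕ → ℕ) : ℕ :=
  am * q ^ (m - 1) + ∑ k ∈ Icc 1 (v - 1), a k * q ^ (m - v + k - 1)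

lemma pow_dvd_highPart {q m v j : ℕ} (am : ℕ) (a : ℕ → ℕ) (hv : 1 ≤ v) (hj : j ≤ m - v) :
    q ^ j ∣ highPart q m v am a := by
  refine dvd_add (Dvd.dvd.mul_left (pow_dvd_pow q (by omega)) _)
    (dvd_sum fun k hk => Dvd.dvd.mul_left (pow_dvd_pow q ?_) _)
  rw [mem_Icc] at hk
  omega

lemma highPart_le {q m v am n : ℕ} {a : ℕ → ℕ} (hv : 1 ≤ v) (hvm : v ≤ m)
    (hm : dig q n m = am) (ha : ∀ k ∈ Icc 1 (v - 1), dig q n (m - v + k) = a k) :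
    highPart q m v am a ≤ n := by
  obtain ⟨w, rfl⟩ : ∃ w, v = w + 1 := ⟨v - 1, by omega⟩
  have hH : highPart q m (w + 1) am a =
      ∑ k ∈ Icc 1 (w + 1), dig q n (m - (w + 1) + k) * q ^ (m - (w + 1) + k - 1) := by
    rw [highPart, Nat.add_sub_cancel, sum_Icc_succ_top (by omega),
      show m - (w + 1) + (w + 1) = m by omega, hm, add_comm (am * _)]
    congr 1
    exact sum_congr rfl fun k hk => by rw [ha k hk]
  rw [hH]
  calc _ ≤ n % q ^ (m - (w + 1)) + _ := Nat.le_add_left _ _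
    _ = n % q ^ (m - (w + 1) + (w + 1)) := mod_pow_add_sum_dig q n _ _
    _ ≤ n := Nat.mod_le _ _

theorem stmt13_general (q m v u : ℕ) (hq : 2 ≤ q) (hv : 1 ≤ v) (hu : u < m - v)
    (am : ℕ)
    (a : ℕ → ℕ)
    (i : ℕ)
    (hiL : i < am * q ^ (m - 1) +
      (∑ k ∈ Finset.Icc 1 (v - 1), a k * q ^ (m - v + k - 1)) + q ^ u)
    (him : dig q i m = am)
    (hik : ∀ k ∈ Finset.Icc 1 (v - 1), dig q i (m - v + k) = a k) :
    (∀ s, u + 1 ≤ s → s ≤ m - v - 1 → dig q i s = 0) ∧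
    i ≤ am * q ^ (m - 1) +
      (∑ k ∈ Finset.Icc 1 (v - 1), a k * q ^ (m - v + k - 1)) + q ^ u - 1 ∧
    (∀ k', 1 ≤ k' → k' ≤ u → ∀ t < q,
      modifyDigit q i k' t < am * q ^ (m - 1) +
        (∑ k ∈ Finset.Icc 1 (v - 1), a k * q ^ (m - v + k - 1)) + q ^ u) := by
  have hq0 : 0 < q := by omega
  have hHi : highPart q m v am a ≤ i := highPart_le hv (by omega) him hik
  refine ⟨fun s hs hs' => ?_, Nat.le_sub_one_of_lt hiL, fun k hk hku t _ => ?_⟩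
  · refine dig_eq_zero_of_dvd hq0 (by omega) (pow_dvd_highPart am a hv (by omega)) hHi ?_
    calc i < highPart q m v am a + q ^ u := hiL
      _ ≤ highPart q m v am a + q ^ (s - 1) := by gcongr; omega
  · exact modifyDigit_lt_of_dvd t hq0 hk hiL
      (dvd_add (pow_dvd_highPart am a hv (by omega)) (pow_dvd_pow q hku))

theorem stmt13 (q m v u : ℕ) (hq : 2 ≤ q) (hv : 1 ≤ v) (hvm : v < m) (hu : u < m - v)
    (am : ℕ) (ham : am ∈ Finset.Icc 1 (q - 1))
    (a : ℕ → ℕ) (ha : ∀ k ∈ Finset.Icc 1 (v - 1), a k ∈ Finset.Icc 1 (q - 1))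
    (i : ℕ)
    (hiL : i < am * q ^ (m - 1) +
      (∑ k ∈ Finset.Icc 1 (v - 1), a k * q ^ (m - v + k - 1)) + q ^ u)
    (him : dig q i m = am)
    (hik : ∀ k ∈ Finset.Icc 1 (v - 1), dig q i (m - v + k) = a k) :
    (∀ s, u + 1 ≤ s → s ≤ m - v - 1 → dig q i s = 0) ∧
    i ≤ am * q ^ (m - 1) +
      (∑ k ∈ Finset.Icc 1 (v - 1), a k * q ^ (m - v + k - 1)) + q ^ u - 1 ∧
    (∀ k', 1 ≤ k' → k' ≤ u → ∀ t < q,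
      modifyDigit q i k' t < am * q ^ (m - 1) +
        (∑ k ∈ Finset.Icc 1 (v - 1), a k * q ^ (m - v + k - 1)) + q ^ u) :=
  stmt13_general q m v u hq hv hu am a i hiL him hik
end
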